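/- Let G ∈ G(n,d,k,w) and let (a_1,...,a_d) ∈ [n−k+1]^d. Then the width-k box S = {a_1,...,a_1+k−1} × ... × {a_d,...,a_d+k−1} (the set of entries of the width-k subarray in location (a_1,...,a_d)) intersects exactly one G-block B, and moreover S ⊆ B̄. -/

import Mathlib

open Finset

/-- `I[:ℓ]`: the set of the `ℓ` smallest elements of `I` (or `I` itself if `|I| < ℓ`). -/
def takeSmallest (I : Finset ℕ) (ℓ : ℕ) : Finset ℕ :=
  I.filter fun x => (I.filter fun y => y ≤ x).card ≤ ℓ

/-- `I[ℓ+1:] = I \ I[:ℓ]`. -/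
def dropSmallest (I : Finset ℕ) (ℓ : ℕ) : Finset ℕ :=
  I \ takeSmallest I ℓ

/-- An `(n,w)`-interval partition: a partition of `[n] = {1,…,n}` into consecutive,
pairwise disjoint intervals `I_1, …, I_t`, each of size `w` or `w+1`, where for `j < j'`
every element of `I j` is smaller than every element of `I j'`. -/
structure IntervalPartition (n w : ℕ) where
  t : ℕ
  I : Fin t → Finset ℕ
  interval : ∀ j, ∃ a b, 1 ≤ a ∧ a ≤ b ∧ b ≤ n ∧ I j = Finset.Icc a b
  size : ∀ j, (I j).card = w ∨ (I j).card = w + 1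
  cover : ∀ x ∈ Finset.Icc 1 n, ∃ j, x ∈ I j
  ordered : ∀ j j' : Fin t, j < j' → ∀ x ∈ I j, ∀ y ∈ I j', x < y

/-- The hypergrid `[n]^d`, as a set of tuples. -/
def cube (n d : ℕ) : Set (Fin d → ℕ) :=
  {x | ∀ i, 1 ≤ x i ∧ x i ≤ n}

/-- The `(n,d,k,w)`-grid induced by an `(n,w)`-interval partition. -/
def gridOf (n d k w : ℕ) (P : IntervalPartition n w) : Set (Fin d → ℕ) :=
  {x ∈ cube n d | ∃ i : Fin d, ∃ j : Fin P.t, x i ∈ takeSmallest (P.I j) (k - 1)}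

/-- `G ∈ 𝒢(n,d,k,w)`: `G` is the grid induced by some `(n,w)`-interval partition. -/
def IsGrid (n d k w : ℕ) (G : Set (Fin d → ℕ)) : Prop :=
  ∃ P : IntervalPartition n w, G = gridOf n d k w P

/-- Two entries of `[n]^d` are neighbors if `∑ i, |x i − y i| = 1`. -/
def Neighbor {d : ℕ} (x y : Fin d → ℕ) : Prop :=
  (∑ i, Nat.dist (x i) (y i)) = 1

/-- A `G`-block: a connected component of the neighborhood graph on `[n]^d \ G`. -/
def IsBlock (n d : ℕ) (G B : Set (Fin d → ℕ)) : Prop :=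
  B.Nonempty ∧ B ⊆ cube n d \ G ∧
    (∀ x ∈ B, ∀ y ∈ B,
      Relation.ReflTransGen
        (fun a b => a ∈ cube n d \ G ∧ b ∈ cube n d \ G ∧ Neighbor a b) x y) ∧
    (∀ x ∈ B, ∀ y, y ∈ cube n d \ G → Neighbor x y → y ∈ B)

/-- The closure `B̄` of a block `B`. -/
def blockClosure (n d k : ℕ) (B : Set (Fin d → ℕ)) : Set (Fin d → ℕ) :=
  {x ∈ cube n d | ∃ y ∈ B, ∀ i, Nat.dist (x i) (y i) < k}

/-- The boundary `∂B = B̄ \ B` of a block `B`. -/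
def blockBoundary (n d k : ℕ) (B : Set (Fin d → ℕ)) : Set (Fin d → ℕ) :=
  blockClosure n d k B \ B

/-- A valid location of a width-`k` subarray in `[n]^d`: an element of `[n−k+1]^d`. -/
def ValidLoc (n d k : ℕ) (a : Fin d → ℕ) : Prop :=
  ∀ i, 1 ≤ a i ∧ a i ≤ n - k + 1

/-- The width-`k` box with lowest corner `a`: `{a_1,…,a_1+k−1} × ⋯ × {a_d,…,a_d+k−1}`. -/
def kbox (d k : ℕ) (a : Fin d → ℕ) : Set (Fin d → ℕ) :=
  {x | ∀ i, a i ≤ x i ∧ x i ≤ a i + k - 1}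

/-- Some forbidden pattern of `F` occurs as a consecutive subarray of `A` at location `a`;
patterns are compared on `[k]^d`. -/
def HasCopyAt {σ : Type*} (d k : ℕ) (F : Set ((Fin d → ℕ) → σ))
    (A : (Fin d → ℕ) → σ) (a : Fin d → ℕ) : Prop :=
  ∃ S ∈ F, ∀ j : Fin d → ℕ, (∀ i, 1 ≤ j i ∧ j i ≤ k) →
    A (fun i => a i + j i - 1) = S j

/-- `A` contains an `F`-copy lying inside the set `X`. -/
def HasCopyIn {σ : Type*} (n d k : ℕ) (F : Set ((Fin d → ℕ) → σ))
    (A : (Fin d → ℕ) → σ) (X : Set (Fin d → ℕ)) : Prop :=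
  ∃ a, ValidLoc n d k a ∧ HasCopyAt d k F A a ∧ kbox d k a ⊆ X

/-- `A` satisfies the `k`-local property `P(F)`: it contains no `F`-copy. -/
def SatisfiesP {σ : Type*} (n d k : ℕ) (F : Set ((Fin d → ℕ) → σ))
    (A : (Fin d → ℕ) → σ) : Prop :=
  ¬ ∃ a, ValidLoc n d k a ∧ HasCopyAt d k F A a

/-- `A` is `ε`-far from `P(F)`: every array satisfying `P(F)` differs from `A`
in at least `ε·n^d` entries of `[n]^d`. -/
def FarFrom {σ : Type*} (n d k : ℕ) (F : Set ((Fin d → ℕ) → σ)) (ε : ℝ)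
    (A : (Fin d → ℕ) → σ) : Prop :=
  ∀ A' : (Fin d → ℕ) → σ, SatisfiesP n d k F A' →
    ε * (n : ℝ) ^ d ≤ ({x | x ∈ cube n d ∧ A x ≠ A' x}).ncard

/-- A block `B` is `(P,A)`-unrepairable: every array agreeing with `A` on `∂B`
(including `A` itself) contains an `F`-copy lying inside `B̄`. -/
def Unrepairable {σ : Type*} (n d k : ℕ) (F : Set ((Fin d → ℕ) → σ))
    (A : (Fin d → ℕ) → σ) (B : Set (Fin d → ℕ)) : Prop :=
  ∀ A' : (Fin d → ℕ) → σ, (∀ x ∈ blockBoundary n d k B, A' x = A x) →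
    HasCopyIn n d k F A' (blockClosure n d k B)

/-!
A coordinate value lies in a grid hyperplane when it is among the first `k - 1` elements of
its interval. Intervals have at least `k` elements, so these values come in runs of exactly
`k - 1` consecutive integers, each followed by a free value. Hence every window of `k`
consecutive values contains a free value, which gives a point `b` of the box outside the grid;
and two free values at distance less than `k` enclose only free values, so any two points of
the box outside the grid are joined by moving one coordinate at a time. The block of `b` is
then the only block meeting the box, and every point of the box is within distance `< k`
of `b`.
-/

theorem mem_takeSmallest_Icc {a b v ℓ : ℕ} :
    v ∈ takeSmallest (Icc a b) ℓ ↔ a ≤ v ∧ v ≤ b ∧ v < a + ℓ := by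
  have hle : (Icc a b).filter (· ≤ v) = Icc a (min b v) := by
    ext x
    simp only [mem_filter, mem_Icc]
    omega
  rw [takeSmallest, mem_filter, hle, Nat.card_Icc, mem_Icc]
  omega

namespace IntervalPartition

variable {n w : ℕ} (P : IntervalPartition n w)

theorem eq_of_mem_of_mem {j j' : Fin P.t} {x : ℕ} (hj : x ∈ P.I j) (hj' : x ∈ P.I j') :
    j = j' := by
  rcases lt_trichotomy j j' with h | h | h
  · exact absurd (P.ordered j j' h x hj x hj') (lt_irrefl x)
  · exact h
  · exact absurd (P.ordered j' j h x hj' x hj) (lt_irrefl x)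

def gridCoords (ℓ : ℕ) : Set ℕ :=
  {v | ∃ j, v ∈ takeSmallest (P.I j) ℓ}

variable {P} {ℓ : ℕ}

theorem exists_gridCoords_run (hℓ : ℓ < w) {v : ℕ} (hv : v ∈ P.gridCoords ℓ) :
    ∃ s, s ≤ v ∧ v < s + ℓ ∧ Set.Ico s (s + ℓ) ⊆ P.gridCoords ℓ ∧
      s + ℓ ∉ P.gridCoords ℓ := by
  obtain ⟨j, hj⟩ := hv
  obtain ⟨a, b, -, -, -, hI⟩ := P.interval j
  have hlen : a + ℓ ≤ b := by
    have := P.size j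
    rw [hI, Nat.card_Icc] at this
    omega
  rw [hI, mem_takeSmallest_Icc] at hj
  refine ⟨a, hj.1, hj.2.2, fun u ⟨hau, hua⟩ => ⟨j, ?_⟩, ?_⟩
  · rw [hI, mem_takeSmallest_Icc]
    exact ⟨hau, by omega, hua⟩
  · rintro ⟨j', hj'⟩
    have hmem : a + ℓ ∈ P.I j := by
      rw [hI, mem_Icc]
      omega
    obtain rfl := P.eq_of_mem_of_mem hmem (filter_subset _ _ hj')
    rw [hI, mem_takeSmallest_Icc] at hj'
    omega

theorem exists_notMem_gridCoords (hℓ : ℓ < w) (c : ℕ) :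
    ∃ v ∈ Set.Icc c (c + ℓ), v ∉ P.gridCoords ℓ := by
  by_cases hc : c ∈ P.gridCoords ℓ
  · obtain ⟨s, hsc, hcs, -, hs⟩ := exists_gridCoords_run hℓ hc
    exact ⟨s + ℓ, ⟨by omega, by omega⟩, hs⟩
  · exact ⟨c, ⟨le_rfl, by omega⟩, hc⟩

theorem Icc_subset_compl_gridCoords (hℓ : ℓ < w) {u z : ℕ} (hu : u ∉ P.gridCoords ℓ)
    (hz : z ∉ P.gridCoords ℓ) (huz : z ≤ u + ℓ) :
    Set.Icc u z ⊆ (P.gridCoords ℓ)ᶜ := by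
  rintro v ⟨huv, hvz⟩ hv
  obtain ⟨s, hsv, hvs, hrun, -⟩ := exists_gridCoords_run hℓ hv
  by_cases hsu : s ≤ u
  · exact hu (hrun ⟨hsu, by omega⟩)
  · exact hz (hrun ⟨by omega, by omega⟩)

theorem uIcc_subset_compl_gridCoords (hℓ : ℓ < w) {u z : ℕ} (hu : u ∉ P.gridCoords ℓ)
    (hz : z ∉ P.gridCoords ℓ) (huz : z ≤ u + ℓ) (hzu : u ≤ z + ℓ) :
    Set.uIcc u z ⊆ (P.gridCoords ℓ)ᶜ := by
  rcases le_total u z with h | h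
  · rw [Set.uIcc_of_le h]
    exact Icc_subset_compl_gridCoords hℓ hu hz huz
  · rw [Set.uIcc_of_ge h]
    exact Icc_subset_compl_gridCoords hℓ hz hu hzu

end IntervalPartition

theorem cube_diff_gridOf {n d k w : ℕ} (P : IntervalPartition n w) :
    cube n d \ gridOf n d k w P = {x | ∀ i, x i ∈ Set.Icc 1 n ∩ (P.gridCoords (k - 1))ᶜ} := by
  ext x
  simp only [cube, gridOf, IntervalPartition.gridCoords, Set.mem_sdiff, Set.mem_ofPred_eq,
    Set.mem_inter_iff, Set.mem_Icc, Set.mem_compl_iff]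
  constructor
  · rintro ⟨hx, hgrid⟩
    exact fun i => ⟨hx i, fun ⟨j, hj⟩ => hgrid ⟨hx, i, j, hj⟩⟩
  · intro h
    exact ⟨fun i => (h i).1, fun ⟨_, i, j, hj⟩ => (h i).2 ⟨j, hj⟩⟩

section Neighbor

variable {d : ℕ}

theorem Neighbor.symm {x y : Fin d → ℕ} (h : Neighbor x y) : Neighbor y x := by
  simpa only [Neighbor, Nat.dist_comm] using h

theorem neighbor_update_succ (p : Fin d → ℕ) (i : Fin d) (t : ℕ) :
    Neighbor (Function.update p i t) (Function.update p i (t + 1)) := by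
  rw [Neighbor, sum_eq_single i]
  · simp [Nat.dist]
  · intro j _ hj
    simp [Function.update_of_ne hj]
  · simp

def neighborIn (N : Set (Fin d → ℕ)) (x y : Fin d → ℕ) : Prop :=
  x ∈ N ∧ y ∈ N ∧ Neighbor x y

instance (N : Set (Fin d → ℕ)) : Std.Symm (neighborIn N) :=
  ⟨fun _ _ h => ⟨h.2.1, h.1, h.2.2.symm⟩⟩

open Relation

variable {S : Set ℕ}

theorem reflTransGen_update_of_le {p : Fin d → ℕ} (hp : ∀ j, p j ∈ S) (i : Fin d) {t : ℕ}
    (hpt : p i ≤ t) (hS : Set.Icc (p i) t ⊆ S) :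
    ReflTransGen (neighborIn {x | ∀ j, x j ∈ S}) p (Function.update p i t) := by
  induction t, hpt using Nat.le_induction with
  | base => rw [Function.update_eq_self]
  | succ t hle ih =>
    have hmem : ∀ s ∈ Set.Icc (p i) (t + 1), ∀ j, Function.update p i s j ∈ S := by
      intro s hs j
      rcases eq_or_ne j i with rfl | h
      · simpa using hS hs
      · simpa [h] using hp j
    refine (ih ((Set.Icc_subset_Icc_right t.le_succ).trans hS)).tail
      ⟨hmem t ⟨hle, t.le_succ⟩, hmem (t + 1) ⟨hle.trans t.le_succ, le_rfl⟩, ?_⟩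
    exact neighbor_update_succ p i t

theorem reflTransGen_update {p : Fin d → ℕ} (hp : ∀ j, p j ∈ S) (i : Fin d) {t : ℕ}
    (hS : Set.uIcc (p i) t ⊆ S) :
    ReflTransGen (neighborIn {x | ∀ j, x j ∈ S}) p (Function.update p i t) := by
  rcases le_total (p i) t with h | h
  · exact reflTransGen_update_of_le hp i h (by rwa [Set.uIcc_of_le h] at hS)
  · have hq : ∀ j, Function.update p i t j ∈ S := by
      intro j
      rcases eq_or_ne j i with rfl | hj
      · simpa using hS Set.right_mem_uIcc
      · simpa [hj] using hp j
    have hback := reflTransGen_update_of_le hq i (by simpa using h)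
      (by simpa [Set.uIcc_of_ge h] using hS)
    rw [Function.update_idem, Function.update_eq_self] at hback
    exact symm hback

theorem reflTransGen_of_uIcc_subset {x y : Fin d → ℕ} (h : ∀ i, Set.uIcc (x i) (y i) ⊆ S) :
    ReflTransGen (neighborIn {z | ∀ i, z i ∈ S}) x y := by
  classical
  suffices ∀ s : Finset (Fin d), ReflTransGen (neighborIn {z | ∀ i, z i ∈ S}) x
      (s.piecewise y x) by simpa using this univ
  intro s
  induction s using Finset.induction_on with
  | empty => rw [piecewise_empty]
  | insert i s hi ih =>
    rw [piecewise_insert]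
    refine ih.trans (reflTransGen_update (fun j => ?_) i ?_)
    · by_cases hj : j ∈ s
      · simpa [hj] using h j Set.right_mem_uIcc
      · simpa [hj] using h j Set.left_mem_uIcc
    · rw [piecewise_eq_of_notMem _ _ _ hi]
      exact h i

end Neighbor

section Block

open Relation

variable {n d : ℕ} {G B : Set (Fin d → ℕ)}

def neighborComponent (N : Set (Fin d → ℕ)) (b : Fin d → ℕ) : Set (Fin d → ℕ) :=
  {y | ReflTransGen (neighborIn N) b y}

theorem mem_of_mem_neighborComponent {N : Set (Fin d → ℕ)} {b y : Fin d → ℕ} (hb : b ∈ N)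
    (hy : y ∈ neighborComponent N b) : y ∈ N := by
  rcases hy.cases_tail with rfl | ⟨_, -, hstep⟩
  · exact hb
  · exact hstep.2.1

theorem isBlock_neighborComponent {b : Fin d → ℕ} (hb : b ∈ cube n d \ G) :
    IsBlock n d G (neighborComponent (cube n d \ G) b) :=
  ⟨⟨b, .refl⟩, fun _ hy => mem_of_mem_neighborComponent hb hy,
    fun _ hx _ hy => (symm hx).trans hy,
    fun _ hx _ hy hxy => hx.tail ⟨mem_of_mem_neighborComponent hb hx, hy, hxy⟩⟩

theorem IsBlock.mem_of_reflTransGen (hB : IsBlock n d G B) {x y : Fin d → ℕ} (hx : x ∈ B)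
    (hxy : ReflTransGen (neighborIn (cube n d \ G)) x y) : y ∈ B := by
  induction hxy with
  | refl => exact hx
  | tail _ hstep ih => exact hB.2.2.2 _ ih _ hstep.2.1 hstep.2.2

theorem IsBlock.eq_neighborComponent (hB : IsBlock n d G B) {b : Fin d → ℕ} (hb : b ∈ B) :
    B = neighborComponent (cube n d \ G) b :=
  Set.ext fun _ => ⟨hB.2.2.1 b hb _, hB.mem_of_reflTransGen hb⟩

end Block

section Box

variable {n d k w : ℕ} {a : Fin d → ℕ}

theorem kbox_subset_cube (ha : ValidLoc n d k a) (hkn : k ≤ n) : kbox d k a ⊆ cube n d := by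
  intro x hx i
  have := ha i
  have := hx i
  omega

theorem kbox_subset_blockClosure (ha : ValidLoc n d k a) (hkn : k ≤ n) {B : Set (Fin d → ℕ)}
    {b : Fin d → ℕ} (hb : b ∈ kbox d k a) (hbB : b ∈ B) :
    kbox d k a ⊆ blockClosure n d k B := by
  refine fun x hx => ⟨kbox_subset_cube ha hkn hx, b, hbB, fun i => ?_⟩
  have := ha i
  have := hx i
  have := hb i
  simp only [Nat.dist]
  omega

theorem exists_mem_kbox_diff_gridOf (P : IntervalPartition n w) (hk : 1 ≤ k) (hkw : k - 1 < w)
    (ha : ValidLoc n d k a) (hkn : k ≤ n) : ∃ b, b ∈ kbox d k a ∩ (cube n d \ gridOf n d k w P) := by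
  choose b hb hfree using fun i => P.exists_notMem_gridCoords hkw (a i)
  have hbox : b ∈ kbox d k a := fun i => ⟨(hb i).1, by have := (hb i).2; omega⟩
  refine ⟨b, hbox, ?_⟩
  rw [cube_diff_gridOf]
  exact fun i => ⟨kbox_subset_cube ha hkn hbox i, hfree i⟩

theorem reflTransGen_of_mem_kbox (P : IntervalPartition n w) (hkw : k - 1 < w)
    {x y : Fin d → ℕ} (hx : x ∈ kbox d k a ∩ (cube n d \ gridOf n d k w P))
    (hy : y ∈ kbox d k a ∩ (cube n d \ gridOf n d k w P)) :
    Relation.ReflTransGen (neighborIn (cube n d \ gridOf n d k w P)) x y := by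
  rw [cube_diff_gridOf] at hx hy ⊢
  refine reflTransGen_of_uIcc_subset fun i => Set.subset_inter
    (Set.uIcc_subset_Icc (hx.2 i).1 (hy.2 i).1)
    (P.uIcc_subset_compl_gridCoords hkw (hx.2 i).2 (hy.2 i).2 ?_ ?_) <;>
  · have := hx.1 i
    have := hy.1 i
    omega

end Box

theorem kbox_meets_unique_block_general (n d k w : ℕ) (hk : 2 ≤ k)
    (hkw : k ≤ w) (hwn : w ≤ n) (G : Set (Fin d → ℕ)) (hG : IsGrid n d k w G)
    (a : Fin d → ℕ) (ha : ValidLoc n d k a) :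
    ∃ B : Set (Fin d → ℕ), IsBlock n d G B ∧ (kbox d k a ∩ B).Nonempty ∧
      kbox d k a ⊆ blockClosure n d k B ∧
      ∀ B' : Set (Fin d → ℕ), IsBlock n d G B' → (kbox d k a ∩ B').Nonempty → B' = B := by
  obtain ⟨P, rfl⟩ := hG
  have hkn : k ≤ n := hkw.trans hwn
  obtain ⟨b, hb⟩ := exists_mem_kbox_diff_gridOf P (by omega) (by omega) ha hkn
  refine ⟨neighborComponent _ b, isBlock_neighborComponent hb.2, ⟨b, hb.1, .refl⟩,
    kbox_subset_blockClosure ha hkn hb.1 .refl, fun B' hB' ⟨x, hx, hxB'⟩ => ?_⟩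
  exact hB'.eq_neighborComponent <| hB'.mem_of_reflTransGen hxB' <|
    reflTransGen_of_mem_kbox P (by omega) ⟨hx, hB'.2.1 hxB'⟩ hb

/-- Any width-`k` box at a valid location intersects exactly one
`G`-block `B`, and is contained in its closure `B̄`. -/
theorem kbox_meets_unique_block (n d k w : ℕ) (hd : 1 ≤ d) (hk : 2 ≤ k)
    (hkw : k ≤ w) (hwn : w ≤ n) (G : Set (Fin d → ℕ)) (hG : IsGrid n d k w G)
    (a : Fin d → ℕ) (ha : ValidLoc n d k a) :
    ∃ B : Set (Fin d → ℕ), IsBlock n d G B ∧ (kbox d k a ∩ B).Nonempty ∧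
      kbox d k a ⊆ blockClosure n d k B ∧
      ∀ B' : Set (Fin d → ℕ), IsBlock n d G B' → (kbox d k a ∩ B').Nonempty → B' = B :=
  kbox_meets_unique_block_general n d k w hk hkw hwn G hG a ha
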